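/- arXiv:2206.07049 — 10 statements merged into one kernel-verified Lean document; each statement's English description precedes it below -/
import Mathlib

section
/- The set of quadruples (p, q, r, w) of integers satisfying p^4 + q^4 = r^4 + w^4 and such that the multiset {|p|, |q|} is different from the multiset {|r|, |w|} is infinite. -/
theorem stmt_1 :
    {s : ℤ × ℤ × ℤ × ℤ |
      s.1^4 + s.2.1^4 = s.2.2.1^4 + s.2.2.2^4 ∧
      ({|s.1|, |s.2.1|} : Multiset ℤ) ≠ {|s.2.2.1|, |s.2.2.2|}}.Infinite := by
  refine Set.infinite_of_injective_forall_mem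
    (f := fun n : ℕ => ((133*(n+1) : ℤ), 134*(n+1), 158*(n+1), 59*(n+1))) ?_ ?_
  · intro a b h
    simp only [Prod.mk.injEq] at h
    have h1 := h.1
    omega
  · intro n
    constructor
    · ring
    · intro h
      have hs := congrArg Multiset.sum h
      have h1 : |(133*(n+1) : ℤ)| = 133*(n+1) := abs_of_nonneg (by positivity)
      have h2 : |(134*(n+1) : ℤ)| = 134*(n+1) := abs_of_nonneg (by positivity)
      have h3 : |(158*(n+1) : ℤ)| = 158*(n+1) := abs_of_nonneg (by positivity)
      have h4 : |(59*(n+1) : ℤ)| = 59*(n+1) := abs_of_nonneg (by positivity)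
      simp only [Multiset.insert_eq_cons, Multiset.sum_cons, Multiset.sum_singleton,
        h1, h2, h3, h4] at hs
      omega
end

section
/- Let p, q, r, w be integers with p^4 + q^4 = r^4 + w^4. Set (x1, x2, x3) = (r*p, w*p, q^2) and (y1, y2, y3) = (r*q, w*q, p^2). Then x1^4 + x2^4 + x3^4 = y1^4 + y2^4 + y3^4 and x1*x2*x3 = y1*y2*y3. -/
theorem stmt_2 (p q r w : ℤ) (h : p^4 + q^4 = r^4 + w^4) :
    (r*p)^4 + (w*p)^4 + (q^2)^4 = (r*q)^4 + (w*q)^4 + (p^2)^4 ∧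
    (r*p) * (w*p) * (q^2) = (r*q) * (w*q) * (p^2) := by
  constructor
  · linear_combination (q^4 - p^4) * h
  · ring
end

section
/- The set of pairs of triples ((x1, x2, x3), (y1, y2, y3)) of integers satisfying x1^4 + x2^4 + x3^4 = y1^4 + y2^4 + y3^4 and x1*x2*x3 = y1*y2*y3, with x1*x2*x3 nonzero and with the multiset {|x1|, |x2|, |x3|} different from the multiset {|y1|, |y2|, |y3|}, is infinite. -/
theorem stmt_4 :
    {s : (ℤ × ℤ × ℤ) × (ℤ × ℤ × ℤ) |
      s.1.1^4 + s.1.2.1^4 + s.1.2.2^4 = s.2.1^4 + s.2.2.1^4 + s.2.2.2^4 ∧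
      s.1.1 * s.1.2.1 * s.1.2.2 = s.2.1 * s.2.2.1 * s.2.2.2 ∧
      s.1.1 * s.1.2.1 * s.1.2.2 ≠ 0 ∧
      ({|s.1.1|, |s.1.2.1|, |s.1.2.2|} : Multiset ℤ) ≠
        {|s.2.1|, |s.2.2.1|, |s.2.2.2|}}.Infinite := by
  apply Set.infinite_of_injective_forall_mem
    (f := fun n : ℕ => ((7*((n:ℤ)+1), 133*((n:ℤ)+1), 153*((n:ℤ)+1)),
                        (17*((n:ℤ)+1), 49*((n:ℤ)+1), 171*((n:ℤ)+1))))
  · intro m n h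
    simp only [Prod.mk.injEq] at h
    have := h.1.1
    omega
  · intro n
    set k : ℤ := (n:ℤ)+1 with hk
    have hkpos : 0 < k := by positivity
    refine ⟨?_, by ring, ?_, ?_⟩
    · show (7*k)^4 + (133*k)^4 + (153*k)^4 = (17*k)^4 + (49*k)^4 + (171*k)^4
      ring
    · show 7*k * (133*k) * (153*k) ≠ 0
      intro h
      have : k^3 ≠ 0 := pow_ne_zero _ hkpos.ne'
      have h2 : (142443:ℤ) * k^3 = 0 := by linarith [h]
      nlinarith [pow_pos hkpos 3]
    · show ({|7*k|, |133*k|, |153*k|} : Multiset ℤ) ≠ {|17*k|, |49*k|, |171*k|}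
      have h7 : |7*k| = 7*k := abs_of_pos (by positivity)
      have h133 : |133*k| = 133*k := abs_of_pos (by positivity)
      have h153 : |153*k| = 153*k := abs_of_pos (by positivity)
      have h17 : |17*k| = 17*k := abs_of_pos (by positivity)
      have h49 : |49*k| = 49*k := abs_of_pos (by positivity)
      have h171 : |171*k| = 171*k := abs_of_pos (by positivity)
      rw [h7, h133, h153, h17, h49, h171]
      intro h
      have hmem : (7*k) ∈ ({17*k, 49*k, 171*k} : Multiset ℤ) := by
        rw [← h]; simp
      simp only [Multiset.insert_eq_cons, Multiset.mem_cons, Multiset.mem_singleton] at hmem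
      rcases hmem with h' | h' | h' <;> omega
end

section
/- Let p, q, r, w, m be integers with p^4 + q^4 = r^4 + w^4. Set x1 = p(m + r^4 - q^4), x2 = q(m + p^4 - w^4), x3 = -r(-m + p^4 - w^4), x4 = w(m - r^4 + q^4), y1 = p(m - r^4 + q^4), y2 = -q(-m + p^4 - w^4), y3 = r(m + p^4 - w^4), y4 = w(m + r^4 - q^4). Then x1^4 + x2^4 + x3^4 + x4^4 = y1^4 + y2^4 + y3^4 + y4^4 and x1*x2*x3*x4 = y1*y2*y3*y4. -/
theorem stmt_5 (p q r w m : ℤ) (h : p^4 + q^4 = r^4 + w^4)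
    (x1 x2 x3 x4 y1 y2 y3 y4 : ℤ)
    (hx1 : x1 = p * (m + r^4 - q^4))
    (hx2 : x2 = q * (m + p^4 - w^4))
    (hx3 : x3 = -r * (-m + p^4 - w^4))
    (hx4 : x4 = w * (m - r^4 + q^4))
    (hy1 : y1 = p * (m - r^4 + q^4))
    (hy2 : y2 = -q * (-m + p^4 - w^4))
    (hy3 : y3 = r * (m + p^4 - w^4))
    (hy4 : y4 = w * (m + r^4 - q^4)) :
    x1^4 + x2^4 + x3^4 + x4^4 = y1^4 + y2^4 + y3^4 + y4^4 ∧
    x1 * x2 * x3 * x4 = y1 * y2 * y3 * y4 := by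
  subst hx1 hx2 hx3 hx4 hy1 hy2 hy3 hy4
  constructor
  · linear_combination (-8*m*(r^4-q^4)*(p^4-w^4)*((r^4-q^4)+(p^4-w^4))) * h
  · ring
end

section
/- For every integer u, let f1 = -1 + 24u^5 + 72u^7 - 72u^9 - 192u^11 + 288u^13 + 288u^15 - 192u^17 - 72u^19 + 72u^21 + 24u^23 and f2 = f1 + 2. Set x1 = u(u^6 + u^4 - 2u^2 - 3u + 1)f1, x2 = (u^6 + 3u^5 - 2u^4 + u^2 + 1)f1, x3 = (u^6 - 3u^5 - 2u^4 + u^2 + 1)f2, x4 = u(u^6 + u^4 - 2u^2 + 3u + 1)f2, y1 = u(u^6 + u^4 - 2u^2 - 3u + 1)f2, y2 = (u^6 + 3u^5 - 2u^4 + u^2 + 1)f2, y3 = (u^6 - 3u^5 - 2u^4 + u^2 + 1)f1, y4 = u(u^6 + u^4 - 2u^2 + 3u + 1)f1. Then x1^4 + x2^4 + x3^4 + x4^4 = y1^4 + y2^4 + y3^4 + y4^4 and x1*x2*x3*x4 = y1*y2*y3*y4. -/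
theorem stmt_6 (u : ℤ)
    (f1 f2 x1 x2 x3 x4 y1 y2 y3 y4 : ℤ)
    (hf1 : f1 = -1 + 24*u^5 + 72*u^7 - 72*u^9 - 192*u^11 + 288*u^13 + 288*u^15
      - 192*u^17 - 72*u^19 + 72*u^21 + 24*u^23)
    (hf2 : f2 = f1 + 2)
    (hx1 : x1 = u * (u^6 + u^4 - 2*u^2 - 3*u + 1) * f1)
    (hx2 : x2 = (u^6 + 3*u^5 - 2*u^4 + u^2 + 1) * f1)
    (hx3 : x3 = (u^6 - 3*u^5 - 2*u^4 + u^2 + 1) * f2)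
    (hx4 : x4 = u * (u^6 + u^4 - 2*u^2 + 3*u + 1) * f2)
    (hy1 : y1 = u * (u^6 + u^4 - 2*u^2 - 3*u + 1) * f2)
    (hy2 : y2 = (u^6 + 3*u^5 - 2*u^4 + u^2 + 1) * f2)
    (hy3 : y3 = (u^6 - 3*u^5 - 2*u^4 + u^2 + 1) * f1)
    (hy4 : y4 = u * (u^6 + u^4 - 2*u^2 + 3*u + 1) * f1) :
    x1^4 + x2^4 + x3^4 + x4^4 = y1^4 + y2^4 + y3^4 + y4^4 ∧
    x1 * x2 * x3 * x4 = y1 * y2 * y3 * y4 := by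
  subst hx1 hx2 hx3 hx4 hy1 hy2 hy3 hy4 hf2 hf1
  constructor <;> ring
end

section
/- Let p, q, r, k, m, n be integers with p^4 + q^4 + r^4 = k^4 + m^4 + n^4. Set (x1, x2, x3, x4, x5) = (k*p, m*p, q^2, n*p, r*q) and (y1, y2, y3, y4, y5) = (k*q, m*q, p^2, n*q, r*p). Then x1^4 + x2^4 + x3^4 + x4^4 + x5^4 = y1^4 + y2^4 + y3^4 + y4^4 + y5^4 and x1*x2*x3*x4*x5 = y1*y2*y3*y4*y5. -/
theorem stmt_8 (p q r k m n : ℤ) (h : p^4 + q^4 + r^4 = k^4 + m^4 + n^4) :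
    (k*p)^4 + (m*p)^4 + (q^2)^4 + (n*p)^4 + (r*q)^4 =
      (k*q)^4 + (m*q)^4 + (p^2)^4 + (n*q)^4 + (r*p)^4 ∧
    (k*p) * (m*p) * (q^2) * (n*p) * (r*q) =
      (k*q) * (m*q) * (p^2) * (n*q) * (r*p) := by
  constructor
  · linear_combination (q^4 - p^4) * h
  · ring
end

section
/- The set of pairs of quintuples ((x1, x2, x3, x4, x5), (y1, y2, y3, y4, y5)) of integers satisfying x1^4 + x2^4 + x3^4 + x4^4 + x5^4 = y1^4 + y2^4 + y3^4 + y4^4 + y5^4 and x1*x2*x3*x4*x5 = y1*y2*y3*y4*y5, with x1*x2*x3*x4*x5 nonzero and with the multiset {|x1|, |x2|, |x3|, |x4|, |x5|} different from the multiset {|y1|, |y2|, |y3|, |y4|, |y5|}, is infinite. -/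
theorem stmt_10 :
    {s : (ℤ × ℤ × ℤ × ℤ × ℤ) × (ℤ × ℤ × ℤ × ℤ × ℤ) |
      s.1.1^4 + s.1.2.1^4 + s.1.2.2.1^4 + s.1.2.2.2.1^4 + s.1.2.2.2.2^4 =
        s.2.1^4 + s.2.2.1^4 + s.2.2.2.1^4 + s.2.2.2.2.1^4 + s.2.2.2.2.2^4 ∧
      s.1.1 * s.1.2.1 * s.1.2.2.1 * s.1.2.2.2.1 * s.1.2.2.2.2 =
        s.2.1 * s.2.2.1 * s.2.2.2.1 * s.2.2.2.2.1 * s.2.2.2.2.2 ∧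
      s.1.1 * s.1.2.1 * s.1.2.2.1 * s.1.2.2.2.1 * s.1.2.2.2.2 ≠ 0 ∧
      ({|s.1.1|, |s.1.2.1|, |s.1.2.2.1|, |s.1.2.2.2.1|, |s.1.2.2.2.2|} : Multiset ℤ) ≠
        {|s.2.1|, |s.2.2.1|, |s.2.2.2.1|, |s.2.2.2.2.1|, |s.2.2.2.2.2|}}.Infinite := by
  apply Set.infinite_of_injective_forall_mem
    (f := fun n : ℕ => (((n:ℤ)+1, 2*((n:ℤ)+1), 7*((n:ℤ)+1), 12*((n:ℤ)+1), 12*((n:ℤ)+1)),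
      ((n:ℤ)+1, 3*((n:ℤ)+1), 6*((n:ℤ)+1), 8*((n:ℤ)+1), 14*((n:ℤ)+1))))
  · intro a b hab
    have : ((a:ℤ)+1) = ((b:ℤ)+1) := congrArg (fun p => p.1.1) hab
    omega
  · intro n
    have hk : (0:ℤ) < (n:ℤ)+1 := by positivity
    set k : ℤ := (n:ℤ)+1 with hkdef
    refine ⟨by ring, by ring, ?_, ?_⟩
    · have : k ≠ 0 := by omega
      positivity
    · intro h
      have h2 : (2*k) ∈ ({|k|, |3*k|, |6*k|, |8*k|, |14*k|} : Multiset ℤ) := by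
        rw [← h]
        have h3 : |2*k| = 2*k := abs_of_pos (by linarith)
        rw [← h3]
        exact Multiset.mem_cons.2 (Or.inr (Multiset.mem_cons_self _ _))
      have e1 : |k| = k := abs_of_pos hk
      have e3 : |3*k| = 3*k := abs_of_pos (by linarith)
      have e6 : |6*k| = 6*k := abs_of_pos (by linarith)
      have e8 : |8*k| = 8*k := abs_of_pos (by linarith)
      have e14 : |14*k| = 14*k := abs_of_pos (by linarith)
      rw [e1, e3, e6, e8, e14] at h2
      simp only [Multiset.insert_eq_cons, Multiset.mem_cons, Multiset.mem_singleton] at h2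
      omega
end

section
/- Let p, q, m, n, r, s, t, w be integers with p^4 + q^4 = m^4 + n^4 and r^4 + s^4 = t^4 + w^4. Set (x1, x2, x3, x4, x5, x6) = (m*p, n*p, q^2, t*r, w*r, s^2) and (y1, y2, y3, y4, y5, y6) = (m*q, n*q, p^2, t*s, w*s, r^2). Then x1^4 + x2^4 + x3^4 + x4^4 + x5^4 + x6^4 = y1^4 + y2^4 + y3^4 + y4^4 + y5^4 + y6^4 and x1*x2*x3*x4*x5*x6 = y1*y2*y3*y4*y5*y6. -/
theorem stmt_11 (p q m n r s t w : ℤ)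
    (h1 : p^4 + q^4 = m^4 + n^4) (h2 : r^4 + s^4 = t^4 + w^4) :
    (m*p)^4 + (n*p)^4 + (q^2)^4 + (t*r)^4 + (w*r)^4 + (s^2)^4 =
      (m*q)^4 + (n*q)^4 + (p^2)^4 + (t*s)^4 + (w*s)^4 + (r^2)^4 ∧
    (m*p) * (n*p) * (q^2) * (t*r) * (w*r) * (s^2) =
      (m*q) * (n*q) * (p^2) * (t*s) * (w*s) * (r^2) := by
  constructor
  · linear_combination (q^4 - p^4) * h1 + (s^4 - r^4) * h2
  · ring
end

section
/- For all integers u and v, set x1 = (3u^5 - u^2 - u^6 + 2u^4 - 1)(u^7 + u^5 - 2u^3 - 3u^2 + u), x2 = (u^7 + u^5 - 2u^3 + 3u^2 + u)(u^7 + u^5 - 2u^3 - 3u^2 + u), x3 = (3u^5 + u^2 + u^6 - 2u^4 + 1)^2, x4 = (3v^5 - v^2 - v^6 + 2v^4 - 1)(v^7 + v^5 - 2v^3 - 3v^2 + v), x5 = (v^7 + v^5 - 2v^3 + 3v^2 + v)(v^7 + v^5 - 2v^3 - 3v^2 + v), x6 = (3v^5 + v^2 + v^6 - 2v^4 + 1)^2,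 and y1 = (3u^5 - u^2 - u^6 + 2u^4 - 1)(3u^5 + u^2 + u^6 - 2u^4 + 1), y2 = (u^7 + u^5 - 2u^3 + 3u^2 + u)(3u^5 + u^2 + u^6 - 2u^4 + 1), y3 = (u^7 + u^5 - 2u^3 - 3u^2 + u)^2, y4 = (3v^5 - v^2 - v^6 + 2v^4 - 1)(3v^5 + v^2 + v^6 - 2v^4 + 1), y5 = (v^7 + v^5 - 2v^3 + 3v^2 + v)(3v^5 + v^2 + v^6 - 2v^4 + 1), y6 = (v^7 + v^5 - 2v^3 - 3v^2 + v)^2. Then x1^4 + x2^4 + x3^4 + x4^4 + x5^4 + x6^4 = y1^4 + y2^4 + y3^4 + y4^4 + y5^4 + y6^4 and x1*x2*x3*x4*x5*x6 = y1*y2*y3*y4*y5*y6. -/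
lemma key4 (u : ℤ) :
    ((3*u^5 - u^2 - u^6 + 2*u^4 - 1) * (u^7 + u^5 - 2*u^3 - 3*u^2 + u))^4 +
    ((u^7 + u^5 - 2*u^3 + 3*u^2 + u) * (u^7 + u^5 - 2*u^3 - 3*u^2 + u))^4 +
    ((3*u^5 + u^2 + u^6 - 2*u^4 + 1)^2)^4 =
    ((3*u^5 - u^2 - u^6 + 2*u^4 - 1) * (3*u^5 + u^2 + u^6 - 2*u^4 + 1))^4 +
    ((u^7 + u^5 - 2*u^3 + 3*u^2 + u) * (3*u^5 + u^2 + u^6 - 2*u^4 + 1))^4 +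
    ((u^7 + u^5 - 2*u^3 - 3*u^2 + u)^2)^4 := by ring

lemma keyp2 (a b d e f h c g : ℤ) :
    a*b * (d*b) * c^2 * (e*f) * (h*f) * g^2 =
    a*c * (d*c) * b^2 * (e*g) * (h*g) * f^2 := by ring

theorem stmt_12 (u v : ℤ)
    (x1 x2 x3 x4 x5 x6 y1 y2 y3 y4 y5 y6 : ℤ)
    (hx1 : x1 = (3*u^5 - u^2 - u^6 + 2*u^4 - 1) * (u^7 + u^5 - 2*u^3 - 3*u^2 + u))
    (hx2 : x2 = (u^7 + u^5 - 2*u^3 + 3*u^2 + u) * (u^7 + u^5 - 2*u^3 - 3*u^2 + u))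
    (hx3 : x3 = (3*u^5 + u^2 + u^6 - 2*u^4 + 1)^2)
    (hx4 : x4 = (3*v^5 - v^2 - v^6 + 2*v^4 - 1) * (v^7 + v^5 - 2*v^3 - 3*v^2 + v))
    (hx5 : x5 = (v^7 + v^5 - 2*v^3 + 3*v^2 + v) * (v^7 + v^5 - 2*v^3 - 3*v^2 + v))
    (hx6 : x6 = (3*v^5 + v^2 + v^6 - 2*v^4 + 1)^2)
    (hy1 : y1 = (3*u^5 - u^2 - u^6 + 2*u^4 - 1) * (3*u^5 + u^2 + u^6 - 2*u^4 + 1))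
    (hy2 : y2 = (u^7 + u^5 - 2*u^3 + 3*u^2 + u) * (3*u^5 + u^2 + u^6 - 2*u^4 + 1))
    (hy3 : y3 = (u^7 + u^5 - 2*u^3 - 3*u^2 + u)^2)
    (hy4 : y4 = (3*v^5 - v^2 - v^6 + 2*v^4 - 1) * (3*v^5 + v^2 + v^6 - 2*v^4 + 1))
    (hy5 : y5 = (v^7 + v^5 - 2*v^3 + 3*v^2 + v) * (3*v^5 + v^2 + v^6 - 2*v^4 + 1))
    (hy6 : y6 = (v^7 + v^5 - 2*v^3 - 3*v^2 + v)^2) :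
    x1^4 + x2^4 + x3^4 + x4^4 + x5^4 + x6^4 =
      y1^4 + y2^4 + y3^4 + y4^4 + y5^4 + y6^4 ∧
    x1 * x2 * x3 * x4 * x5 * x6 = y1 * y2 * y3 * y4 * y5 * y6 := by
  subst hx1 hx2 hx3 hx4 hx5 hx6 hy1 hy2 hy3 hy4 hy5 hy6
  constructor
  · have hu := key4 u
    have hv := key4 v
    linarith
  · exact keyp2 _ _ _ _ _ _ _ _
end

section
/- The set of pairs of sextuples ((x1, ..., x6), (y1, ..., y6)) of integers satisfying x1^4 + x2^4 + x3^4 + x4^4 + x5^4 + x6^4 = y1^4 + y2^4 + y3^4 + y4^4 + y5^4 + y6^4 and x1*x2*x3*x4*x5*x6 = y1*y2*y3*y4*y5*y6, with x1*x2*x3*x4*x5*x6 nonzero and with the multiset {|x1|, ..., |x6|} different from the multiset {|y1|, ..., |y6|}, is infinite. -/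
theorem stmt_13 :
    {s : (ℤ × ℤ × ℤ × ℤ × ℤ × ℤ) × (ℤ × ℤ × ℤ × ℤ × ℤ × ℤ) |
      s.1.1^4 + s.1.2.1^4 + s.1.2.2.1^4 + s.1.2.2.2.1^4 + s.1.2.2.2.2.1^4 + s.1.2.2.2.2.2^4 =
        s.2.1^4 + s.2.2.1^4 + s.2.2.2.1^4 + s.2.2.2.2.1^4 + s.2.2.2.2.2.1^4 + s.2.2.2.2.2.2^4 ∧
      s.1.1 * s.1.2.1 * s.1.2.2.1 * s.1.2.2.2.1 * s.1.2.2.2.2.1 * s.1.2.2.2.2.2 =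
        s.2.1 * s.2.2.1 * s.2.2.2.1 * s.2.2.2.2.1 * s.2.2.2.2.2.1 * s.2.2.2.2.2.2 ∧
      s.1.1 * s.1.2.1 * s.1.2.2.1 * s.1.2.2.2.1 * s.1.2.2.2.2.1 * s.1.2.2.2.2.2 ≠ 0 ∧
      ({|s.1.1|, |s.1.2.1|, |s.1.2.2.1|, |s.1.2.2.2.1|, |s.1.2.2.2.2.1|, |s.1.2.2.2.2.2|} : Multiset ℤ) ≠
        {|s.2.1|, |s.2.2.1|, |s.2.2.2.1|, |s.2.2.2.2.1|, |s.2.2.2.2.2.1|, |s.2.2.2.2.2.2|}}.Infinite := by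
  apply Set.infinite_of_injective_forall_mem
    (f := fun n : ℕ =>
      (((n : ℤ) + 1, (n : ℤ) + 1, 2 * ((n : ℤ) + 1), 7 * ((n : ℤ) + 1),
        12 * ((n : ℤ) + 1), 12 * ((n : ℤ) + 1)),
       ((n : ℤ) + 1, (n : ℤ) + 1, 3 * ((n : ℤ) + 1), 6 * ((n : ℤ) + 1),
        8 * ((n : ℤ) + 1), 14 * ((n : ℤ) + 1))))
  · intro a b h
    simp only [Prod.mk.injEq] at h
    exact_mod_cast (by linarith [h.1.1] : (a : ℤ) = b)
  intro n
  set t : ℤ := (n : ℤ) + 1 with ht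
  clear_value t
  have htpos : 0 < t := by rw [ht]; positivity
  have htne : t ≠ 0 := htpos.ne'
  refine ⟨by ring, by ring, ?_, ?_⟩
  · simp only [mul_ne_zero_iff]
    norm_num [htne]
  · intro h
    rw [abs_of_pos htpos, abs_of_pos (by linarith : (0:ℤ) < 2 * t),
      abs_of_pos (by linarith : (0:ℤ) < 3 * t), abs_of_pos (by linarith : (0:ℤ) < 6 * t),
      abs_of_pos (by linarith : (0:ℤ) < 7 * t), abs_of_pos (by linarith : (0:ℤ) < 8 * t),
      abs_of_pos (by linarith : (0:ℤ) < 12 * t), abs_of_pos (by linarith : (0:ℤ) < 14 * t)] at h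
    have h2 : (2 * t) ∈ ({t, t, 3 * t, 6 * t, 8 * t, 14 * t} : Multiset ℤ) := by
      rw [← h]; simp
    simp only [Multiset.insert_eq_cons, Multiset.mem_cons, Multiset.mem_singleton] at h2
    omega
end
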